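/- arXiv:math/0410346 — 2 statements merged into one kernel-verified Lean document; each statement's English description precedes it below -/
import Mathlib

section
/- Let K be a field complete with respect to a non-archimedean absolute value, X an r-dimensional variety over K, and φ: X → A^r_K a morphism that is étale at a K-rational point p and maps p to a K-rational point. Then the induced map φ_K: X(K) → K^r restricts to a homeomorphism from a strong-topology neighbourhood of p onto a neighbourhood of φ(p). -/
/-!
Write the variety as the zero set of `g = (f₁, …, fₙ)` in `K^r × K^n`. The Jacobian of `g`
with respect to the last `n` coordinates is invertible at `p₀`, so by the implicit function
theorem over the complete nontrivially normed field `K`, the map `p ↦ (g p, p.1)` is an open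
partial homeomorphism near `p₀`; on the slice `g = 0` it is the projection to `K^r`. If the
absolute value is trivial, `K` is discrete and there is nothing to prove.
-/

open MvPolynomial
open scoped Matrix

namespace MvPolynomial

noncomputable def jacobian {R σ ι : Type*} [CommSemiring R] (f : ι → MvPolynomial σ R) :
    Matrix ι σ (MvPolynomial σ R) :=
  Matrix.of fun i j => pderiv j (f i)

variable {K : Type*} [NontriviallyNormedField K] {σ : Type*} [Fintype σ] [DecidableEq σ]

theorem hasStrictFDerivAt_eval (g : MvPolynomial σ K) (a : σ → K) :
    HasStrictFDerivAt (fun x => eval x g)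
      (∑ i, eval a (pderiv i g) • (ContinuousLinearMap.proj i : (σ → K) →L[K] K)) a := by
  induction g using MvPolynomial.induction_on with
  | C c =>
    simp only [eval_C]
    exact (hasStrictFDerivAt_const c a).congr_fderiv (by ext; simp)
  | add p q hp hq =>
    simp only [map_add]
    exact (hp.add hq).congr_fderiv (by ext; simp [Finset.sum_add_distrib, add_mul])
  | mul_X p i hp =>
    simp only [eval_mul, eval_X]
    refine (hp.mul (hasStrictFDerivAt_apply i a)).congr_fderiv ?_
    ext v
    simp [Pi.single_apply, add_mul, Finset.sum_add_distrib, Finset.mul_sum, apply_ite (eval a),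
      mul_assoc]

theorem hasStrictFDerivAt_eval_jacobian [CompleteSpace K] {ι : Type*} [Fintype ι]
    (f : ι → MvPolynomial σ K) (a : σ → K) :
    HasStrictFDerivAt (fun x i => eval x (f i))
      (LinearMap.toContinuousLinearMap (Matrix.toLin' ((jacobian f).map (eval a)))) a :=
  hasStrictFDerivAt_pi'' fun i => (hasStrictFDerivAt_eval (f i) a).congr_fderiv <| by
    ext v
    simp [jacobian, Matrix.mulVec, dotProduct]

end MvPolynomial

section

variable {X Y Z : Type*} [TopologicalSpace X] [TopologicalSpace Y] [TopologicalSpace Z]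

/-- A pointwise `IsLocalHomeomorphOn`, with the homeomorphism between open sets made
explicit. -/
def IsLocalHomeomorphAt (φ : X → Y) (x : X) : Prop :=
  ∃ (U : Set X) (V : Set Y) (e : U ≃ₜ V),
    IsOpen U ∧ IsOpen V ∧ x ∈ U ∧ φ x ∈ V ∧ ∀ y : U, (e y : Y) = φ y

theorem isLocalHomeomorphAt_of_discreteTopology [DiscreteTopology X] [DiscreteTopology Y]
    (φ : X → Y) (x : X) : IsLocalHomeomorphAt φ x := by
  let e : ({x} : Set X) ≃ₜ ({φ x} : Set Y) := Homeomorph.homeomorphOfUnique _ _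
  refine ⟨_, _, e, isOpen_discrete _, isOpen_discrete _, rfl, rfl, fun y => ?_⟩
  rw [Set.mem_singleton_iff.mp (e y).2, Set.mem_singleton_iff.mp y.2]

theorem OpenPartialHomeomorph.isLocalHomeomorphAt_slice (Φ : OpenPartialHomeomorph X (Y × Z))
    (b : Y) {P : X → Prop} (hP : ∀ x, P x ↔ (Φ x).1 = b) {x : X} (hx : x ∈ Φ.source)
    (hPx : P x) : IsLocalHomeomorphAt (fun y : Subtype P => (Φ y).2) ⟨x, hPx⟩ := by
  have hΦ (y : Subtype P) : (b, (Φ y).2) = Φ y := Prod.ext ((hP y).1 y.2).symm rfl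
  have hmaps (y : Subtype P) (hy : y.1 ∈ Φ.source) : (b, (Φ y).2) ∈ Φ.target := by
    rw [hΦ]; exact Φ.map_source hy
  have hsymm (z : Z) (hz : (b, z) ∈ Φ.target) : P (Φ.symm (b, z)) :=
    (hP _).2 (by rw [Φ.right_inv hz])
  refine ⟨{y | y.1 ∈ Φ.source}, {z | (b, z) ∈ Φ.target},
    { toFun y := ⟨(Φ y.1).2, hmaps y.1 y.2⟩
      invFun z := ⟨⟨Φ.symm (b, z), hsymm z z.2⟩, Φ.map_target z.2⟩
      left_inv y := Subtype.ext <| Subtype.ext <| by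
        simp only [hΦ]
        exact Φ.left_inv y.2
      right_inv z := Subtype.ext (congrArg Prod.snd (Φ.right_inv z.2))
      continuous_toFun :=
        (Φ.continuousOn.comp_continuous (continuous_subtype_val.comp continuous_subtype_val)
          fun y => y.2).snd.subtype_mk fun y => hmaps y.1 y.2
      continuous_invFun :=
        ((Φ.continuousOn_symm.comp_continuous (continuous_const.prodMk continuous_subtype_val)
          fun z => z.2).subtype_mk fun z => hsymm z z.2).subtype_mk fun z => Φ.map_target z.2 },
    Φ.open_source.preimage continuous_subtype_val,
    Φ.open_target.preimage (continuous_const.prodMk continuous_id), hx, hmaps _ hx,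
    fun _ => rfl⟩

end

theorem HasStrictFDerivAt.isLocalHomeomorphAt_fst_levelSet {𝕜 : Type*}
    [NontriviallyNormedField 𝕜]
    {E₁ : Type*} [NormedAddCommGroup E₁] [NormedSpace 𝕜 E₁] [CompleteSpace E₁]
    {E₂ : Type*} [NormedAddCommGroup E₂] [NormedSpace 𝕜 E₂] [CompleteSpace E₂]
    {F : Type*} [NormedAddCommGroup F] [NormedSpace 𝕜 F] [CompleteSpace F]
    {f : E₁ × E₂ → F} {f' : E₁ × E₂ →L[𝕜] F} {u : E₁ × E₂} (hf : HasStrictFDerivAt f f' u)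
    (hf' : (f' ∘L .inr 𝕜 E₁ E₂).IsInvertible) {P : E₁ × E₂ → Prop}
    (hP : ∀ p, P p ↔ f p = f u) (hu : P u) :
    IsLocalHomeomorphAt (fun p : Subtype P => p.1.1) ⟨u, hu⟩ :=
  (hf.implicitFunctionDataOfProdDomain hf').toOpenPartialHomeomorph.isLocalHomeomorphAt_slice
    (f u) hP (ImplicitFunctionData.pt_mem_toOpenPartialHomeomorph_source _) hu

theorem Matrix.mulVec_sumElim_zero_left {R m n₁ n₂ : Type*} [NonUnitalNonAssocSemiring R]
    [Fintype n₁] [Fintype n₂] (M : Matrix m (n₁ ⊕ n₂) R) (v : n₂ → R) :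
    M *ᵥ Sum.elim 0 v = M.submatrix id Sum.inr *ᵥ v := by
  ext i
  simp [Matrix.mulVec, dotProduct, Fintype.sum_sum_type]

theorem ContinuousLinearMap.isInvertible_of_apply_eq_mulVec {𝕜 : Type*}
    [NontriviallyNormedField 𝕜] [CompleteSpace 𝕜] {ι : Type*} [Fintype ι] [DecidableEq ι]
    {g : (ι → 𝕜) →L[𝕜] (ι → 𝕜)} {M : Matrix ι ι 𝕜} (hg : ∀ v, g v = M *ᵥ v) (hM : M.det ≠ 0) :
    g.IsInvertible :=
  have := M.invertibleOfIsUnitDet (isUnit_iff_ne_zero.mpr hM)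
  ⟨(M.toLinearEquiv' this).toContinuousLinearEquiv, ext fun v => (hg v).symm⟩

theorem stmt13_general (K : Type) [NormedField K] [CompleteSpace K]
    (r n : ℕ) (f : Fin n → MvPolynomial (Fin r ⊕ Fin n) K)
    (p₀ : (Fin r → K) × (Fin n → K))
    (hp₀ : ∀ l, eval (Sum.elim p₀.1 p₀.2) (f l) = 0)
    (hetale : eval (Sum.elim p₀.1 p₀.2)
      (Matrix.det (Matrix.of fun i j => pderiv (Sum.inr j) (f i))) ≠ 0) :
    ∃ (U : Set {p : (Fin r → K) × (Fin n → K) //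
        ∀ l, eval (Sum.elim p.1 p.2) (f l) = 0})
      (V : Set (Fin r → K)) (e : U ≃ₜ V),
      IsOpen U ∧ IsOpen V ∧ (⟨p₀, hp₀⟩ : {p : (Fin r → K) × (Fin n → K) //
        ∀ l, eval (Sum.elim p.1 p.2) (f l) = 0}) ∈ U ∧ p₀.1 ∈ V ∧
      ∀ x : U, (e x : Fin r → K) = x.1.1.1 := by
  rcases NormedField.discreteTopology_or_nontriviallyNormedField K with _ | ⟨⟨_, rfl⟩⟩
  · exact isLocalHomeomorphAt_of_discreteTopology (fun p : {p : (Fin r → K) × (Fin n → K) //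
      ∀ l, eval (Sum.elim p.1 p.2) (f l) = 0} => p.1.1) ⟨p₀, hp₀⟩
  let S : ((Fin r → K) × (Fin n → K)) ≃L[K] (Fin r ⊕ Fin n → K) :=
    (LinearEquiv.sumArrowLequivProdArrow _ _ K K).symm.toContinuousLinearEquiv
  have hS (p : (Fin r → K) × (Fin n → K)) : S p = Sum.elim p.1 p.2 := rfl
  let J := (jacobian f).map (eval (S p₀))
  have hG := (hasStrictFDerivAt_eval_jacobian f (S p₀)).comp p₀ S.hasStrictFDerivAt
  refine hG.isLocalHomeomorphAt_fst_levelSet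
    (ContinuousLinearMap.isInvertible_of_apply_eq_mulVec (M := J.submatrix id Sum.inr)
      (fun v => J.mulVec_sumElim_zero_left v) ?_) (fun p => ?_) hp₀
  · rwa [RingHom.map_det] at hetale
  · simp [_root_.funext_iff, hS, hp₀]

/-- Non-archimedean implicit function theorem: let `K` be complete with respect to a
non-archimedean absolute value, and let `X(K)` be given locally near a rational point `p₀`
as the zero locus in `K^r × K^n` of polynomials `f₁,…,fₙ` with `det(∂f/∂X)(p₀) ≠ 0`
(i.e. the projection `φ` to `𝔸^r` is étale at `p₀`).  Then `φ_K` restricts to a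
homeomorphism from a strong neighbourhood of `p₀` in `X(K)` onto a neighbourhood of
`φ(p₀)` in `K^r`. -/
theorem stmt13 (K : Type) [NormedField K] [CompleteSpace K]
    (hna : ∀ x y : K, ‖x + y‖ ≤ max ‖x‖ ‖y‖)
    (r n : ℕ) (f : Fin n → MvPolynomial (Fin r ⊕ Fin n) K)
    (p₀ : (Fin r → K) × (Fin n → K))
    (hp₀ : ∀ l, eval (Sum.elim p₀.1 p₀.2) (f l) = 0)
    (hetale : eval (Sum.elim p₀.1 p₀.2)
      (Matrix.det (Matrix.of fun i j => pderiv (Sum.inr j) (f i))) ≠ 0) :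
    ∃ (U : Set {p : (Fin r → K) × (Fin n → K) //
        ∀ l, eval (Sum.elim p.1 p.2) (f l) = 0})
      (V : Set (Fin r → K)) (e : U ≃ₜ V),
      IsOpen U ∧ IsOpen V ∧ (⟨p₀, hp₀⟩ : {p : (Fin r → K) × (Fin n → K) //
        ∀ l, eval (Sum.elim p.1 p.2) (f l) = 0}) ∈ U ∧ p₀.1 ∈ V ∧
      ∀ x : U, (e x : Fin r → K) = x.1.1.1 :=
  stmt13_general K r n f p₀ hp₀ hetale
end

section
/- Let K be a complete non-archimedean field with ring of integers R, f_1,...,f_n ∈ R[Y_1,...,Y_r][X_1,...,X_n], and a ∈ R^n such that f_l(0,...,0,a) = 0 for all l and δ := |det(∂f/∂X)(0,a)| > 0. Then for all y ∈ K^r with |y_l| < δ^2 for all l, there exists a unique b ∈ R^n with f_l(y,b) = 0 and |b_l − a_l| < δ for all l; this defines a map s: {y : |y| < δ^2} → R^n with s(0) = a. -/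
/-!
Simplified Newton iteration. Let `M` be the Jacobian in `X` at `(0, a)`, so `‖det M‖ = δ`, and
`M⁻¹ = (det M)⁻¹ • adj M` has entries of norm at most `δ⁻¹` because the adjugate is integral.
For fixed `y` the zeros of `f(y, ·)` are the fixed points of `Φ b = b - M⁻¹ f(y, b)`.

For an integral polynomial `g` and integral points `u, v` the ultrametric inequality gives
`‖g(u) - g(v)‖ ≤ ‖u - v‖` and `‖g(u) - g(v) - ∇g(v)·(u - v)‖ ≤ ‖u - v‖²`. Applied to `f` and to
its partial derivatives, these yield `‖Φ b - Φ b'‖ ≤ δ⁻¹ ρ ‖b - b'‖` as soon as `y`, `b - a` and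
`b' - a` have norm at most `ρ`. For `‖y‖ < δ²` and `t = δ⁻¹ ‖y‖ < δ`, the map `Φ` is therefore a
contraction of the closed ball of radius `t` about `a`, and Banach's fixed point theorem gives a
zero there; the same estimate with `ρ < δ` shows that two zeros in the open ball of radius `δ`
coincide.
-/

open MvPolynomial IsUltrametricDist
open scoped Matrix

lemma norm_sumElim_le {E α β : Type*} [SeminormedAddCommGroup E] [Fintype α] [Fintype β]
    {y : α → E} {b : β → E} {C : ℝ} (hy : ‖y‖ ≤ C) (hb : ‖b‖ ≤ C) : ‖Sum.elim y b‖ ≤ C := by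
  refine (pi_norm_le_iff_of_nonneg ((norm_nonneg y).trans hy)).2 ?_
  rintro (i | j)
  exacts [(norm_le_pi_norm y i).trans hy, (norm_le_pi_norm b j).trans hb]

lemma norm_le_one_of_norm_sub_le_one {E : Type*} [SeminormedAddCommGroup E]
    [IsUltrametricDist E] {a b : E} (hba : ‖b - a‖ ≤ 1) (ha : ‖a‖ ≤ 1) : ‖b‖ ≤ 1 := by
  simpa using (norm_add_le_max (b - a) a).trans (max_le hba ha)

section Taylor

variable {K σ : Type*} [NormedField K]

lemma norm_coeff_pderiv_le_one [IsUltrametricDist K] {f : MvPolynomial σ K}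
    (hf : ∀ d, ‖coeff d f‖ ≤ 1) (i : σ) (d : σ →₀ ℕ) : ‖coeff d (pderiv i f)‖ ≤ 1 := by
  rw [coeff_pderiv, norm_mul]
  exact mul_le_one₀ (hf _) (norm_nonneg _) (mod_cast norm_natCast_le_one K (d i + 1))

variable [Fintype σ]

noncomputable def taylorRemainder (u v : σ → K) (g : MvPolynomial σ K) : K :=
  eval u g - eval v g - ∑ i, eval v (pderiv i g) * (u i - v i)

lemma taylorRemainder_add (u v : σ → K) (g h : MvPolynomial σ K) :
    taylorRemainder u v (g + h) = taylorRemainder u v g + taylorRemainder u v h := by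
  simp only [taylorRemainder, map_add, add_mul, Finset.sum_add_distrib]
  ring

lemma taylorRemainder_neg (u v : σ → K) (g : MvPolynomial σ K) :
    taylorRemainder u v (-g) = -taylorRemainder u v g := by
  simp only [taylorRemainder, map_neg, neg_mul, Finset.sum_neg_distrib]
  ring

lemma taylorRemainder_mul (u v : σ → K) (g h : MvPolynomial σ K) :
    taylorRemainder u v (g * h) = eval v g * taylorRemainder u v h
      + eval v h * taylorRemainder u v g + (eval u g - eval v g) * (eval u h - eval v h) := by
  simp only [taylorRemainder, Derivation.leibniz, map_add, map_mul, smul_eq_mul, add_mul,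
    Finset.sum_add_distrib, mul_assoc, ← Finset.mul_sum]
  ring

lemma taylorRemainder_C (u v : σ → K) (c : K) : taylorRemainder u v (C c) = 0 := by
  simp [taylorRemainder]

lemma taylorRemainder_X [DecidableEq σ] (u v : σ → K) (j : σ) :
    taylorRemainder u v (X j) = 0 := by
  simp [taylorRemainder, pderiv_X, Pi.single_apply]

variable [IsUltrametricDist K]

/-- By `taylorRemainder_mul` these bounds are stable under products, so they only need to be
checked on constants and variables. -/
def taylorControlled (u v : σ → K) : Subring (MvPolynomial σ K) where
  carrier := {g | ‖eval u g‖ ≤ 1 ∧ ‖eval v g‖ ≤ 1 ∧ ‖eval u g - eval v g‖ ≤ ‖u - v‖ ∧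
    ‖taylorRemainder u v g‖ ≤ ‖u - v‖ ^ 2}
  zero_mem' := by simp [taylorRemainder]
  one_mem' := by simp [taylorRemainder]
  add_mem' := by
    rintro g h ⟨hgu, hgv, hg, hTg⟩ ⟨hhu, hhv, hh, hTh⟩
    refine ⟨?_, ?_, ?_, ?_⟩ <;> simp only [map_add, taylorRemainder_add, add_sub_add_comm]
    all_goals exact (norm_add_le_max _ _).trans (max_le ‹_› ‹_›)
  neg_mem' := by
    rintro g ⟨hgu, hgv, hg, hTg⟩
    refine ⟨?_, ?_, ?_, ?_⟩ <;> simp only [map_neg, taylorRemainder_neg, norm_neg, neg_sub_neg]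
    exacts [hgu, hgv, by rwa [norm_sub_rev], hTg]
  mul_mem' := by
    rintro g h ⟨hgu, hgv, hg, hTg⟩ ⟨hhu, hhv, hh, hTh⟩
    have hε := norm_nonneg (u - v)
    refine ⟨?_, ?_, ?_, ?_⟩ <;> simp only [map_mul, taylorRemainder_mul]
    · rw [norm_mul]; exact mul_le_one₀ hgu (norm_nonneg _) hhu
    · rw [norm_mul]; exact mul_le_one₀ hgv (norm_nonneg _) hhv
    · rw [show eval u g * eval u h - eval v g * eval v h
          = eval u g * (eval u h - eval v h) + (eval u g - eval v g) * eval v h by ring]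
      refine (norm_add_le_max _ _).trans (max_le ?_ ?_) <;> rw [norm_mul]
      · simpa using mul_le_mul hgu hh (norm_nonneg _) zero_le_one
      · simpa using mul_le_mul hg hhv (norm_nonneg _) hε
    · refine (norm_add_le_max _ _).trans
        (max_le ((norm_add_le_max _ _).trans (max_le ?_ ?_)) ?_) <;> rw [norm_mul]
      · simpa using mul_le_mul hgv hTh (norm_nonneg _) zero_le_one
      · simpa using mul_le_mul hhv hTg (norm_nonneg _) zero_le_one
      · simpa [sq] using mul_le_mul hg hh (norm_nonneg _) hε

lemma C_mem_taylorControlled (u v : σ → K) {c : K} (hc : ‖c‖ ≤ 1) :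
    C c ∈ taylorControlled u v :=
  ⟨by simpa using hc, by simpa using hc, by simp, by simp [taylorRemainder_C]⟩

lemma X_mem_taylorControlled {u v : σ → K} (hu : ‖u‖ ≤ 1) (hv : ‖v‖ ≤ 1) (j : σ) :
    X j ∈ taylorControlled u v := by
  classical
  refine ⟨?_, ?_, ?_, by simp [taylorRemainder_X]⟩ <;> simp only [eval_X]
  · exact (norm_le_pi_norm u j).trans hu
  · exact (norm_le_pi_norm v j).trans hv
  · exact norm_le_pi_norm (u - v) j

lemma mem_taylorControlled {u v : σ → K} (hu : ‖u‖ ≤ 1) (hv : ‖v‖ ≤ 1)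
    {g : MvPolynomial σ K} (hg : ∀ d, ‖coeff d g‖ ≤ 1) : g ∈ taylorControlled u v := by
  rw [g.as_sum]
  refine Subring.sum_mem _ fun d _ => ?_
  rw [monomial_eq]
  exact Subring.mul_mem _ (C_mem_taylorControlled u v (hg d))
    (Subring.prod_mem _ fun j _ => Subring.pow_mem _ (X_mem_taylorControlled hu hv j) _)

lemma norm_eval_le_one {x : σ → K} (hx : ‖x‖ ≤ 1) {g : MvPolynomial σ K}
    (hg : ∀ d, ‖coeff d g‖ ≤ 1) : ‖eval x g‖ ≤ 1 :=
  (mem_taylorControlled hx hx hg).1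

lemma norm_eval_sub_eval_le {u v : σ → K} (hu : ‖u‖ ≤ 1) (hv : ‖v‖ ≤ 1)
    {g : MvPolynomial σ K} (hg : ∀ d, ‖coeff d g‖ ≤ 1) : ‖eval u g - eval v g‖ ≤ ‖u - v‖ :=
  (mem_taylorControlled hu hv hg).2.2.1

lemma norm_taylorRemainder_le {u v : σ → K} (hu : ‖u‖ ≤ 1) (hv : ‖v‖ ≤ 1)
    {g : MvPolynomial σ K} (hg : ∀ d, ‖coeff d g‖ ≤ 1) :
    ‖taylorRemainder u v g‖ ≤ ‖u - v‖ ^ 2 :=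
  (mem_taylorControlled hu hv hg).2.2.2

end Taylor

section Matrix

variable {K m n : Type*} [NormedField K] [IsUltrametricDist K] [Fintype m] [Fintype n]

lemma norm_mulVec_le {A : Matrix m n K} {α : ℝ} (hα : 0 ≤ α) (hA : ∀ i j, ‖A i j‖ ≤ α)
    (w : n → K) : ‖A *ᵥ w‖ ≤ α * ‖w‖ := by
  refine (pi_norm_le_iff_of_nonneg (by positivity)).2 fun i => ?_
  refine norm_sum_le_of_forall_le_of_nonneg (by positivity) fun j _ => ?_
  rw [norm_mul]
  exact mul_le_mul (hA i j) (norm_le_pi_norm w j) (norm_nonneg _) hα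

variable [DecidableEq n]

lemma norm_det_le_one {A : Matrix n n K} (hA : ∀ i j, ‖A i j‖ ≤ 1) : ‖A.det‖ ≤ 1 := by
  rw [Matrix.det_apply']
  refine norm_sum_le_of_forall_le_of_nonneg zero_le_one fun p _ => ?_
  rw [norm_mul, norm_prod]
  exact mul_le_one₀ (norm_intCast_le_one K _) (Finset.prod_nonneg fun _ _ => norm_nonneg _)
    (Finset.prod_le_one (fun _ _ => norm_nonneg _) fun i _ => hA _ _)

lemma norm_adjugate_apply_le_one {A : Matrix n n K} (hA : ∀ i j, ‖A i j‖ ≤ 1) (i j : n) :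
    ‖A.adjugate i j‖ ≤ 1 := by
  rw [Matrix.adjugate_apply]
  refine norm_det_le_one fun k l => ?_
  rw [Matrix.updateRow_apply]
  split_ifs
  · rw [Pi.single_apply]
    split_ifs <;> simp
  · exact hA k l

lemma norm_inv_mulVec_le {A : Matrix n n K} (hA : ∀ i j, ‖A i j‖ ≤ 1) (w : n → K) :
    ‖A⁻¹ *ᵥ w‖ ≤ ‖A.det‖⁻¹ * ‖w‖ := by
  rw [Matrix.inv_def, Ring.inverse_eq_inv, Matrix.smul_mulVec, norm_smul, norm_inv]
  gcongr
  simpa using norm_mulVec_le zero_le_one (norm_adjugate_apply_le_one hA) w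

end Matrix

section Newton

variable {K ι κ : Type*} [NormedField K] [Fintype κ] (f : κ → MvPolynomial (ι ⊕ κ) K)

noncomputable def jacobianX (x : ι ⊕ κ → K) : Matrix κ κ K :=
  Matrix.of fun i j => eval x (pderiv (Sum.inr j) (f i))

noncomputable def evalSystem (y : ι → K) (b : κ → K) : κ → K :=
  fun l => eval (Sum.elim y b) (f l)

noncomputable def newtonMap [DecidableEq κ] (a : κ → K) (y : ι → K) (b : κ → K) : κ → K :=
  b - (jacobianX f (Sum.elim 0 a))⁻¹ *ᵥ evalSystem f y b

variable {f}

lemma newtonMap_eq_self_iff [DecidableEq κ] {a : κ → K}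
    (hdet : (jacobianX f (Sum.elim 0 a)).det ≠ 0) (y : ι → K) (b : κ → K) :
    newtonMap f a y b = b ↔ evalSystem f y b = 0 := by
  set M := jacobianX f (Sum.elim 0 a)
  rw [newtonMap, sub_eq_self]
  refine ⟨fun h => ?_, fun h => by rw [h, Matrix.mulVec_zero]⟩
  rw [← Matrix.one_mulVec (evalSystem f y b), ← Matrix.mul_nonsing_inv M (Ne.isUnit hdet),
    ← Matrix.mulVec_mulVec, h, Matrix.mulVec_zero]

variable [Fintype ι] [IsUltrametricDist K] (hf : ∀ l d, ‖coeff d (f l)‖ ≤ 1)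
include hf

lemma norm_jacobianX_apply_le_one {x : ι ⊕ κ → K} (hx : ‖x‖ ≤ 1) (i j : κ) :
    ‖jacobianX f x i j‖ ≤ 1 :=
  norm_eval_le_one hx (norm_coeff_pderiv_le_one (hf i) _)

lemma norm_jacobianX_sub_apply_le {x x' : ι ⊕ κ → K} (hx : ‖x‖ ≤ 1) (hx' : ‖x'‖ ≤ 1)
    (i j : κ) : ‖(jacobianX f x - jacobianX f x') i j‖ ≤ ‖x - x'‖ :=
  norm_eval_sub_eval_le hx hx' (norm_coeff_pderiv_le_one (hf i) _)

lemma norm_evalSystem_sub_evalSystem_le {y y' : ι → K} {b : κ → K} (hy : ‖y‖ ≤ 1)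
    (hy' : ‖y'‖ ≤ 1) (hb : ‖b‖ ≤ 1) : ‖evalSystem f y b - evalSystem f y' b‖ ≤ ‖y - y'‖ := by
  refine (pi_norm_le_iff_of_nonneg (norm_nonneg _)).2 fun l => ?_
  refine (norm_eval_sub_eval_le (norm_sumElim_le hy hb) (norm_sumElim_le hy' hb) (hf l)).trans ?_
  rw [← Sum.elim_sub_sub, sub_self]
  exact norm_sumElim_le le_rfl (by simp)

lemma norm_evalSystem_sub_sub_le {y : ι → K} {b b' : κ → K} (hy : ‖y‖ ≤ 1) (hb : ‖b‖ ≤ 1)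
    (hb' : ‖b'‖ ≤ 1) :
    ‖evalSystem f y b - evalSystem f y b' - jacobianX f (Sum.elim y b') *ᵥ (b - b')‖
      ≤ ‖b - b'‖ ^ 2 := by
  have hdiff : Sum.elim y b - Sum.elim y b' = Sum.elim (0 : ι → K) (b - b') := by
    rw [← Sum.elim_sub_sub, sub_self, Pi.zero_def]
  refine (pi_norm_le_iff_of_nonneg (by positivity)).2 fun l => ?_
  have hrem : (evalSystem f y b - evalSystem f y b' - jacobianX f (Sum.elim y b') *ᵥ (b - b')) l
      = taylorRemainder (Sum.elim y b) (Sum.elim y b') (f l) := by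
    simp [taylorRemainder, evalSystem, jacobianX, Matrix.mulVec, dotProduct,
      Fintype.sum_sum_type, mul_comm]
  rw [hrem]
  refine (norm_taylorRemainder_le (norm_sumElim_le hy hb) (norm_sumElim_le hy hb') (hf l)).trans ?_
  rw [hdiff]
  gcongr
  exact norm_sumElim_le (by simp) le_rfl

variable [DecidableEq κ] {a : κ → K} (ha : ‖a‖ ≤ 1)
include ha

lemma norm_det_jacobianX_le_one : ‖(jacobianX f (Sum.elim 0 a)).det‖ ≤ 1 :=
  norm_det_le_one (norm_jacobianX_apply_le_one hf (norm_sumElim_le (by simp) ha))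

lemma norm_newtonMap_sub_newtonMap_le (hdet : (jacobianX f (Sum.elim 0 a)).det ≠ 0)
    {ρ : ℝ} (hρ : ρ ≤ 1) {y : ι → K} {b b' : κ → K} (hy : ‖y‖ ≤ ρ) (hb : ‖b - a‖ ≤ ρ)
    (hb' : ‖b' - a‖ ≤ ρ) :
    ‖newtonMap f a y b - newtonMap f a y b'‖
      ≤ ‖(jacobianX f (Sum.elim 0 a)).det‖⁻¹ * (ρ * ‖b - b'‖) := by
  set M := jacobianX f (Sum.elim 0 a)
  set J := jacobianX f (Sum.elim y b')
  set F := evalSystem f y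
  have hρ0 : 0 ≤ ρ := (norm_nonneg _).trans hy
  have hb1 : ‖b‖ ≤ 1 := norm_le_one_of_norm_sub_le_one (hb.trans hρ) ha
  have hb'1 : ‖b'‖ ≤ 1 := norm_le_one_of_norm_sub_le_one (hb'.trans hρ) ha
  have hbb' : ‖b - b'‖ ≤ ρ := by
    rw [← dist_eq_norm] at hb hb' ⊢
    exact (IsUltrametricDist.dist_triangle_max b a b').trans (max_le hb (dist_comm a b' ▸ hb'))
  have hJM : ∀ i j, ‖(J - M) i j‖ ≤ ρ := fun i j =>
    (norm_jacobianX_sub_apply_le hf (norm_sumElim_le (hy.trans hρ) hb'1)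
      (norm_sumElim_le (by simp) ha) i j).trans
      (by rw [← Sum.elim_sub_sub, sub_zero]; exact norm_sumElim_le hy hb')
  have hdecomp : newtonMap f a y b - newtonMap f a y b'
      = -(M⁻¹ *ᵥ ((J - M) *ᵥ (b - b') + (F b - F b' - J *ᵥ (b - b')))) := by
    have hMinv : M⁻¹ *ᵥ (M *ᵥ (b - b')) = b - b' := by
      rw [Matrix.mulVec_mulVec, Matrix.nonsing_inv_mul M (Ne.isUnit hdet), Matrix.one_mulVec]
    have hnewton : newtonMap f a y b - newtonMap f a y b'
        = M⁻¹ *ᵥ (M *ᵥ (b - b') - (F b - F b')) := by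
      rw [Matrix.mulVec_sub, hMinv, Matrix.mulVec_sub]
      simp only [newtonMap]
      abel
    rw [hnewton, ← Matrix.mulVec_neg, Matrix.sub_mulVec]
    congr 1
    abel
  rw [hdecomp, norm_neg]
  refine (norm_inv_mulVec_le
    (norm_jacobianX_apply_le_one hf (norm_sumElim_le (by simp) ha)) _).trans ?_
  gcongr
  refine (norm_add_le_max _ _).trans (max_le (norm_mulVec_le hρ0 hJM _) ?_)
  refine (norm_evalSystem_sub_sub_le hf (hy.trans hρ) hb1 hb'1).trans ?_
  rw [sq]
  gcongr

lemma norm_newtonMap_sub_le (hza : evalSystem f 0 a = 0) {y : ι → K} (hy : ‖y‖ ≤ 1) :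
    ‖newtonMap f a y a - a‖ ≤ ‖(jacobianX f (Sum.elim 0 a)).det‖⁻¹ * ‖y‖ := by
  rw [newtonMap, sub_sub_cancel_left, norm_neg]
  refine (norm_inv_mulVec_le
    (norm_jacobianX_apply_le_one hf (norm_sumElim_le (by simp) ha)) _).trans ?_
  gcongr
  have h := norm_evalSystem_sub_evalSystem_le hf hy (by simp : ‖(0 : ι → K)‖ ≤ 1) ha
  rwa [hza, sub_zero, sub_zero] at h

variable (hdet : (jacobianX f (Sum.elim 0 a)).det ≠ 0)
include hdet

lemma exists_evalSystem_eq_zero [CompleteSpace K] (hza : evalSystem f 0 a = 0) {y : ι → K}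
    (hy : ‖y‖ < ‖(jacobianX f (Sum.elim 0 a)).det‖ ^ 2) :
    ∃ b, evalSystem f y b = 0 ∧ ‖b - a‖ < ‖(jacobianX f (Sum.elim 0 a)).det‖ := by
  set δ := ‖(jacobianX f (Sum.elim 0 a)).det‖
  set Φ := newtonMap f a y
  have hδ : 0 < δ := norm_pos_iff.2 hdet
  have hδ1 : δ ≤ 1 := norm_det_jacobianX_le_one hf ha
  -- `t` bounds the first Newton step `‖Φ a - a‖`
  set t := δ⁻¹ * ‖y‖
  have ht0 : 0 ≤ t := by positivity
  have htδ : t < δ := calc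
    t < δ⁻¹ * δ ^ 2 := mul_lt_mul_of_pos_left hy (inv_pos.2 hδ)
    _ = δ := by field_simp
  have hyt : ‖y‖ ≤ t := le_mul_of_one_le_left (norm_nonneg y) ((one_le_inv₀ hδ).2 hδ1)
  have hκ : δ⁻¹ * t < 1 := calc
    δ⁻¹ * t < δ⁻¹ * δ := by gcongr
    _ = 1 := inv_mul_cancel₀ hδ.ne'
  have hlip : ∀ b ∈ Metric.closedBall a t, ∀ b' ∈ Metric.closedBall a t,
      ‖Φ b - Φ b'‖ ≤ δ⁻¹ * t * ‖b - b'‖ := fun b hb b' hb' => by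
    rw [mul_assoc]
    exact norm_newtonMap_sub_newtonMap_le hf ha hdet (htδ.le.trans hδ1) hyt
      (mem_closedBall_iff_norm.1 hb) (mem_closedBall_iff_norm.1 hb')
  have hmaps : Set.MapsTo Φ (Metric.closedBall a t) (Metric.closedBall a t) := by
    intro b hb
    have hstep : ‖Φ b - Φ a‖ ≤ t := (hlip b hb a (Metric.mem_closedBall_self ht0)).trans
      (mul_le_of_le_one_left ht0 hκ.le |>.trans' (by gcongr; exact mem_closedBall_iff_norm.1 hb))
    rw [mem_closedBall_iff_norm, ← sub_add_sub_cancel _ (Φ a)]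
    exact (norm_add_le_max _ _).trans
      (max_le hstep (norm_newtonMap_sub_le hf ha hza (hyt.trans (htδ.le.trans hδ1))))
  have hcontr : ContractingWith ⟨δ⁻¹ * t, by positivity⟩ (hmaps.restrict Φ _ _) :=
    ⟨mod_cast hκ, LipschitzWith.of_dist_le_mul fun b b' => by
      rw [Subtype.dist_eq, Subtype.dist_eq, dist_eq_norm, dist_eq_norm]
      exact hlip b b.2 b' b'.2⟩
  obtain ⟨b, hb, hfix, -⟩ := hcontr.exists_fixedPoint' Metric.isClosed_closedBall.isComplete
    hmaps (Metric.mem_closedBall_self ht0) (edist_ne_top _ _)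
  exact ⟨b, (newtonMap_eq_self_iff hdet y b).1 hfix, (mem_closedBall_iff_norm.1 hb).trans_lt htδ⟩

lemma eq_of_evalSystem_eq_zero {y : ι → K} {b b' : κ → K}
    (hy : ‖y‖ < ‖(jacobianX f (Sum.elim 0 a)).det‖)
    (hb : evalSystem f y b = 0) (hba : ‖b - a‖ < ‖(jacobianX f (Sum.elim 0 a)).det‖)
    (hb' : evalSystem f y b' = 0) (hb'a : ‖b' - a‖ < ‖(jacobianX f (Sum.elim 0 a)).det‖) :
    b = b' := by
  set δ := ‖(jacobianX f (Sum.elim 0 a)).det‖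
  set ρ := max ‖y‖ (max ‖b - a‖ ‖b' - a‖)
  have hδ : 0 < δ := norm_pos_iff.2 hdet
  have hρδ : ρ < δ := max_lt hy (max_lt hba hb'a)
  have hcontract : ‖b - b'‖ ≤ δ⁻¹ * ρ * ‖b - b'‖ := by
    have h := norm_newtonMap_sub_newtonMap_le hf ha hdet
      (hρδ.le.trans (norm_det_jacobianX_le_one hf ha)) (le_max_left _ _)
      ((le_max_left _ _).trans (le_max_right _ _)) ((le_max_right _ _).trans (le_max_right _ _))
    rwa [(newtonMap_eq_self_iff hdet y b).2 hb, (newtonMap_eq_self_iff hdet y b').2 hb',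
      ← mul_assoc] at h
  have hκ : δ⁻¹ * ρ < 1 := by rw [inv_mul_lt_one₀ hδ]; exact hρδ
  by_contra hne
  have hpos : 0 < ‖b - b'‖ := norm_pos_iff.2 (sub_ne_zero.2 hne)
  exact (hcontract.trans_lt (mul_lt_of_lt_one_left hpos hκ)).false

lemma existsUnique_evalSystem_eq_zero [CompleteSpace K] (hza : evalSystem f 0 a = 0)
    {y : ι → K} (hy : ‖y‖ < ‖(jacobianX f (Sum.elim 0 a)).det‖ ^ 2) :
    ∃! b, evalSystem f y b = 0 ∧ ‖b - a‖ < ‖(jacobianX f (Sum.elim 0 a)).det‖ := by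
  obtain ⟨b, hb, hba⟩ := exists_evalSystem_eq_zero hf ha hdet hza hy
  have hyδ := hy.trans_le
    (pow_le_of_le_one (norm_nonneg _) (norm_det_jacobianX_le_one hf ha) two_ne_zero)
  exact ⟨b, ⟨hb, hba⟩, fun b' ⟨hb', hb'a⟩ =>
    eq_of_evalSystem_eq_zero hf ha hdet hyδ hb' hb'a hb hba⟩

end Newton

/-- Hensel's Lemma with parameters (the local section in the proof of the non-archimedean
implicit function theorem): let `K` be complete non-archimedean with ring of integers `R`,
`f₁,…,fₙ ∈ R[Y₁,…,Y_r][X₁,…,Xₙ]` and `a ∈ Rⁿ` with `fₗ(0,a) = 0` and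
`δ := ‖det(∂f/∂X)(0,a)‖ > 0`.  Then for each `y` with `‖yₗ‖ < δ²` there is a unique
`b ∈ Rⁿ` with `fₗ(y,b) = 0` and `‖bₗ − aₗ‖ < δ`; this defines a section `s` with
`s 0 = a`. -/
theorem stmt14 (K : Type) [NormedField K] [CompleteSpace K]
    (hna : ∀ x y : K, ‖x + y‖ ≤ max ‖x‖ ‖y‖)
    (r n : ℕ) (f : Fin n → MvPolynomial (Fin r ⊕ Fin n) K)
    (hf : ∀ l d, ‖coeff d (f l)‖ ≤ 1)
    (a : Fin n → K) (ha : ∀ i, ‖a i‖ ≤ 1)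
    (hza : ∀ l, eval (Sum.elim (0 : Fin r → K) a) (f l) = 0)
    (δ : ℝ) (hδ : δ = ‖eval (Sum.elim (0 : Fin r → K) a)
      (Matrix.det (Matrix.of fun i j => pderiv (Sum.inr j) (f i)))‖)
    (hδpos : 0 < δ) :
    (∀ y : Fin r → K, (∀ l, ‖y l‖ < δ ^ 2) →
      ∃! b : Fin n → K, (∀ i, ‖b i‖ ≤ 1) ∧ (∀ l, eval (Sum.elim y b) (f l) = 0) ∧
        ∀ l, ‖b l - a l‖ < δ) ∧
    ∃ s : (Fin r → K) → (Fin n → K), s 0 = a ∧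
      ∀ y : Fin r → K, (∀ l, ‖y l‖ < δ ^ 2) →
        (∀ i, ‖s y i‖ ≤ 1) ∧ (∀ l, eval (Sum.elim y (s y)) (f l) = 0) ∧
          ∀ l, ‖s y l - a l‖ < δ := by
  have : IsUltrametricDist K := isUltrametricDist_of_forall_norm_add_le_max_norm hna
  have hδdet : δ = ‖(jacobianX f (Sum.elim 0 a)).det‖ := by rw [hδ, RingHom.map_det]; rfl
  have ha' : ‖a‖ ≤ 1 := (pi_norm_le_iff_of_nonneg zero_le_one).2 ha
  have hdet : (jacobianX f (Sum.elim 0 a)).det ≠ 0 := norm_pos_iff.1 (hδdet ▸ hδpos)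
  have hδ1 : δ ≤ 1 := hδdet ▸ norm_det_jacobianX_le_one hf ha'
  have hsolution : ∀ y b, ((∀ i, ‖b i‖ ≤ 1) ∧ (∀ l, eval (Sum.elim y b) (f l) = 0) ∧
      ∀ l, ‖b l - a l‖ < δ) ↔ evalSystem f y b = 0 ∧ ‖b - a‖ < δ := fun y b => by
    rw [pi_norm_lt_iff hδpos, funext_iff]
    exact ⟨fun ⟨_, hb, hba⟩ => ⟨hb, hba⟩, fun ⟨hb, hba⟩ =>
      ⟨fun i => norm_le_one_of_norm_sub_le_one ((hba i).le.trans hδ1) (ha i), hb, hba⟩⟩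
  have hunique : ∀ y : Fin r → K, (∀ l, ‖y l‖ < δ ^ 2) →
      ∃! b : Fin n → K, (∀ i, ‖b i‖ ≤ 1) ∧ (∀ l, eval (Sum.elim y b) (f l) = 0) ∧
        ∀ l, ‖b l - a l‖ < δ := fun y hy => by
    rw [existsUnique_congr (hsolution y), hδdet]
    rw [← pi_norm_lt_iff (by positivity), hδdet] at hy
    exact existsUnique_evalSystem_eq_zero hf ha' hdet (funext hza) hy
  refine ⟨hunique, fun y => if hy : ∀ l, ‖y l‖ < δ ^ 2 then (hunique y hy).exists.choose else a,
    ?_, fun y hy => ?_⟩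
  · have h0 : ∀ l, ‖(0 : Fin r → K) l‖ < δ ^ 2 := fun l => by simpa using pow_pos hδpos 2
    simp only [dif_pos h0]
    exact (hunique 0 h0).unique (hunique 0 h0).exists.choose_spec
      ⟨ha, hza, fun _ => by simpa using hδpos⟩
  · simp only [dif_pos hy]
    exact (hunique y hy).exists.choose_spec
end
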